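/- Let ℓ ∈ ℕ and m ∈ {0,…,ℓ}, let A ⊆ ℝ^ℓ be countably m-rectifiable and let B ⊆ ℝ^ℓ be (ℓ−m)-negligible. Then the set of displacement vectors {y − x : x ∈ A, y ∈ B} ⊆ ℝ^ℓ has ℓ-dimensional Lebesgue (outer) measure zero. -/

import Mathlib

/-!
Parametrising `A` by Lipschitz maps `f : S → ℝ^ℓ` with `S ⊆ ℝ^m`, each displacement `y - f s` is
the image of `(s, y) ∈ S × B` under a Lipschitz map, so it suffices that `ℝ^m × B` is
`H^ℓ`-null. Cover `B` by sets `t j` of radii `r j` with `∑ r j ^ (ℓ - m)` small and pair each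
`t j` with the grid of cubes of side `≈ r j` in a unit cube of `ℝ^m`: this covers the product
by sets of diameter `≤ r j`, about `r j ^ (-m)` of them for each `j`, so the `H^ℓ`-sum is at most
`2^m ∑ r j ^ (ℓ - m)`. Finally, Lebesgue measure on `ℝ^ℓ` is a constant multiple of `H^ℓ`.
-/

open Set MeasureTheory

/-- A subset `A` of a metric space is countably `m`-rectifiable iff it is the union of the
images of countably many Lipschitz maps, each defined on some subset of `ℝ^m`. -/
def CountablyRectifiable (m : ℕ) {X : Type*} [MetricSpace X] (A : Set X) : Prop :=
  ∃ (S : ℕ → Set (EuclideanSpace ℝ (Fin m))) (f : ∀ i, S i → X) (C : ℕ → NNReal),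
    (∀ i, LipschitzWith (C i) (f i)) ∧ A = ⋃ i, Set.range (f i)

open Metric Filter Module Measure
open scoped ENNReal NNReal

section EMetricSpace

variable {X : Type*} [EMetricSpace X] [MeasurableSpace X] [BorelSpace X]

theorem hausdorffMeasure_eq_zero_of_forall_cover {d : ℝ} {s : Set X}
    (h : ∀ ε > (0 : ℝ≥0∞), ∀ δ > (0 : ℝ≥0∞), ∃ (κ : Type*) (_ : Countable κ) (t : κ → Set X),
      s ⊆ ⋃ k, t k ∧ (∀ k, ediam (t k) ≤ δ) ∧ ∑' k, ediam (t k) ^ d ≤ ε) :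
    μH[d] s = 0 := by
  refine le_antisymm (ENNReal.le_of_forall_pos_le_add fun ε hε _ => ?_) bot_le
  choose κ hκ t hst htδ hsum using fun n : ℕ =>
    h ε (by exact_mod_cast hε) (n : ℝ≥0∞)⁻¹ (ENNReal.inv_pos.2 (ENNReal.natCast_ne_top n))
  calc μH[d] s ≤ liminf (fun n => ∑' k, ediam (t n k) ^ d) atTop :=
        hausdorffMeasure_le_liminf_tsum d s _ ENNReal.tendsto_inv_nat_nhds_zero t
          (Eventually.of_forall htδ) (Eventually.of_forall hst)
    _ ≤ ε := liminf_le_of_frequently_le' (Frequently.of_forall hsum)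
    _ = 0 + ε := (zero_add _).symm

theorem exists_cover_of_hausdorffMeasure_eq_zero {d : ℝ} (hd : 0 < d) {s : Set X}
    (hs : μH[d] s = 0) {ε δ : ℝ≥0∞} (hε : 0 < ε) (hδ : 0 < δ) :
    ∃ t : ℕ → Set X, s ⊆ ⋃ n, t n ∧ (∀ n, ediam (t n) ≤ δ) ∧ ∑' n, ediam (t n) ^ d < ε := by
  rw [hausdorffMeasure_apply] at hs
  have hinf := (iSup₂_eq_bot.1 hs δ hδ).trans_lt hε
  simp only [iInf_lt_iff] at hinf
  obtain ⟨t, hst, htδ, hsum⟩ := hinf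
  refine ⟨t, hst, htδ, lt_of_le_of_lt (ENNReal.tsum_le_tsum fun n => ?_) hsum⟩
  rcases (t n).eq_empty_or_nonempty with hempty | hne
  · simp [hempty, ENNReal.zero_rpow_of_pos hd]
  · exact le_iSup_of_le hne le_rfl

/-- Sets of diameter zero still get a positive radius, which the grid construction in
`hausdorffMeasure_pi_Ico_prod_eq_zero` needs to choose its mesh. -/
theorem exists_cover_radii_of_hausdorffMeasure_eq_zero {d : ℝ} (hd : 0 < d) {s : Set X}
    (hs : μH[d] s = 0) {ε : ℝ≥0∞} (hε : 0 < ε) {δ : ℝ≥0} (hδ : 0 < δ) :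
    ∃ (t : ℕ → Set X) (r : ℕ → ℝ≥0), s ⊆ ⋃ n, t n ∧
      (∀ n, 0 < r n ∧ r n ≤ δ ∧ ediam (t n) ≤ r n) ∧ ∑' n, (r n : ℝ≥0∞) ^ d ≤ ε := by
  have hε2 : 0 < ε / 2 := ENNReal.half_pos hε.ne'
  obtain ⟨t, hst, htδ, hsum⟩ :=
    exists_cover_of_hausdorffMeasure_eq_zero hd hs hε2 (ENNReal.coe_pos.2 hδ)
  obtain ⟨η, hη0, hηsum⟩ := ENNReal.exists_pos_sum_of_countable hε2.ne' ℕ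
  have hfin : ∀ n, ediam (t n) ≠ ∞ := fun n => ne_top_of_le_ne_top ENNReal.coe_ne_top (htδ n)
  refine ⟨t, fun n => max (ediam (t n)).toNNReal (min δ (η n ^ d⁻¹)), hst,
    fun n => ⟨?_, ?_, ?_⟩, ?_⟩
  · exact lt_max_of_lt_right (lt_min hδ (NNReal.rpow_pos (hη0 n)))
  · exact max_le (by simpa using ENNReal.toNNReal_mono ENNReal.coe_ne_top (htδ n)) (min_le_left _ _)
  · rw [← ENNReal.coe_toNNReal (hfin n)]
    exact ENNReal.coe_le_coe.2 (le_max_left _ _)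
  · have hle : ∀ n, ((max (ediam (t n)).toNNReal (min δ (η n ^ d⁻¹)) : ℝ≥0) : ℝ≥0∞) ^ d
        ≤ ediam (t n) ^ d + η n := by
      intro n
      rw [ENNReal.coe_max, ENNReal.coe_toNNReal (hfin n)]
      rcases le_total (ediam (t n)) (min δ (η n ^ d⁻¹) : ℝ≥0) with h | h
      · rw [max_eq_right h]
        refine le_add_left ?_
        rw [← ENNReal.coe_rpow_of_nonneg _ hd.le, ENNReal.coe_le_coe]
        calc min δ (η n ^ d⁻¹) ^ d ≤ (η n ^ d⁻¹) ^ d := by gcongr; exact min_le_right _ _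
          _ = η n := NNReal.rpow_inv_rpow hd.ne' _
      · rw [max_eq_left h]
        exact le_self_add
    calc ∑' n, _ ≤ ∑' n, (ediam (t n) ^ d + η n) := ENNReal.tsum_le_tsum hle
      _ = ∑' n, ediam (t n) ^ d + ∑' n, (η n : ℝ≥0∞) := ENNReal.tsum_add
      _ ≤ ε / 2 + ε / 2 := add_le_add hsum.le hηsum.le
      _ = ε := ENNReal.add_halves ε

end EMetricSpace

theorem ediam_prod_le {X Y : Type*} [PseudoEMetricSpace X] [PseudoEMetricSpace Y]
    (s : Set X) (t : Set Y) : ediam (s ×ˢ t) ≤ max (ediam s) (ediam t) :=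
  ediam_le fun p hp q hq => by
    rw [Prod.edist_eq]
    exact max_le_max (edist_le_ediam_of_mem hp.1 hq.1) (edist_le_ediam_of_mem hp.2 hq.2)

section Grid

variable {ι : Type*}

def gridCell (a : ι → ℝ) (N : ℕ) (k : ι → ℕ) : Set (ι → ℝ) :=
  pi univ fun i => Icc (a i + k i / N) (a i + (k i + 1) / N)

theorem ediam_gridCell_le [Fintype ι] (a : ι → ℝ) {N : ℕ} (hN : 0 < N) (k : ι → ℕ) :
    ediam (gridCell a N k) ≤ (N : ℝ≥0∞)⁻¹ := by
  refine ediam_pi_le_of_le fun i => ?_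
  rw [Real.ediam_Icc, add_div, add_sub_add_left_eq_sub, add_sub_cancel_left, one_div,
    ENNReal.ofReal_inv_of_pos (by exact_mod_cast hN), ENNReal.ofReal_natCast]

theorem pi_Ico_subset_iUnion_gridCell (a : ι → ℝ) {N : ℕ} (hN : 0 < N) :
    pi univ (fun i => Ico (a i) (a i + 1)) ⊆ ⋃ k : ι → Fin N, gridCell a N fun i => k i := by
  intro x hx
  simp only [mem_univ_pi, mem_Ico] at hx
  have hN' : (0 : ℝ) < N := by exact_mod_cast hN
  have hfloor : ∀ i, ⌊(x i - a i) * N⌋₊ < N := fun i =>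
    (Nat.floor_lt (by nlinarith [(hx i).1])).2 (by nlinarith [(hx i).2])
  refine mem_iUnion.2 ⟨fun i => ⟨_, hfloor i⟩, mem_univ_pi.2 fun i => ⟨?_, ?_⟩⟩
  · calc a i + ⌊(x i - a i) * N⌋₊ / N ≤ a i + (x i - a i) * N / N := by
          gcongr; exact Nat.floor_le (by nlinarith [(hx i).1])
      _ = x i := by field_simp; ring
  · calc x i = a i + (x i - a i) * N / N := by field_simp; ring
      _ ≤ a i + (⌊(x i - a i) * N⌋₊ + 1) / N := by
          gcongr; exact (Nat.lt_floor_add_one _).le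

end Grid

theorem natCeil_inv_pow_mul_rpow_le {r : ℝ≥0} (hr0 : 0 < r) (hr1 : r ≤ 1) (n : ℕ) (d : ℝ) :
    (⌈r⁻¹⌉₊ : ℝ≥0∞) ^ n * (r : ℝ≥0∞) ^ ((n : ℝ) + d) ≤ 2 ^ n * (r : ℝ≥0∞) ^ d := by
  rw [ENNReal.rpow_add _ _ (ENNReal.coe_ne_zero.2 hr0.ne') ENNReal.coe_ne_top,
    ENNReal.rpow_natCast, ← mul_assoc, ← mul_pow]
  gcongr
  have hceil : (⌈r⁻¹⌉₊ : ℝ≥0) * r ≤ 2 :=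
    calc (⌈r⁻¹⌉₊ : ℝ≥0) * r ≤ (r⁻¹ + 1) * r := by
          gcongr; exact (Nat.ceil_lt_add_one (by positivity)).le
      _ = 1 + r := by rw [add_mul, inv_mul_cancel₀ hr0.ne', one_mul]
      _ ≤ 2 := by linarith [show (r : ℝ≥0) ≤ 1 from hr1]
  exact_mod_cast hceil

theorem hausdorffMeasure_pi_Ico_prod_eq_zero {ι X : Type*} [Fintype ι] [EMetricSpace X]
    [MeasurableSpace X] [BorelSpace X] (a : ι → ℝ) {d : ℝ} (hd : 0 < d) {B : Set X}
    (hB : μH[d] B = 0) :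
    μH[Fintype.card ι + d] ((pi univ fun i => Ico (a i) (a i + 1)) ×ˢ B) = 0 := by
  set n := Fintype.card ι
  refine hausdorffMeasure_eq_zero_of_forall_cover fun ε hε δ hδ => ?_
  obtain ⟨δ', hδ'0, hδ'δ⟩ := ENNReal.lt_iff_exists_nnreal_btwn.1 hδ
  obtain ⟨t, r, hBt, hr, hsum⟩ := exists_cover_radii_of_hausdorffMeasure_eq_zero hd hB
    (ε := ε / 2 ^ n) (ENNReal.div_pos hε.ne' (by simp))
    (lt_min (ENNReal.coe_pos.1 hδ'0) one_pos : 0 < min δ' 1)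
  have hr1 : ∀ j, r j ≤ 1 := fun j => (hr j).2.1.trans (min_le_right _ _)
  have hrδ : ∀ j, (r j : ℝ≥0∞) ≤ δ := fun j =>
    (ENNReal.coe_le_coe.2 ((hr j).2.1.trans (min_le_left _ _))).trans hδ'δ.le
  set N : ℕ → ℕ := fun j => ⌈(r j)⁻¹⌉₊
  have hN : ∀ j, 0 < N j := fun j => Nat.ceil_pos.2 (inv_pos.2 (hr j).1)
  have hNr : ∀ j, (N j : ℝ≥0∞)⁻¹ ≤ r j := fun j => by
    rw [ENNReal.inv_le_iff_inv_le, ← ENNReal.coe_inv (hr j).1.ne']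
    exact_mod_cast Nat.le_ceil _
  set cell : (Σ j, ι → Fin (N j)) → Set ((ι → ℝ) × X) :=
    fun p => gridCell a (N p.1) (fun i => p.2 i) ×ˢ t p.1
  have hcell : ∀ p, ediam (cell p) ≤ r p.1 := fun p => (ediam_prod_le _ _).trans
    (max_le ((ediam_gridCell_le a (hN p.1) _).trans (hNr p.1)) (hr p.1).2.2)
  refine ⟨Σ j, ι → Fin (N j), inferInstance, cell, ?_, fun p => (hcell p).trans (hrδ p.1), ?_⟩
  · rintro ⟨x, y⟩ ⟨hx, hy⟩
    obtain ⟨j, hj⟩ := mem_iUnion.1 (hBt hy)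
    obtain ⟨k, hk⟩ := mem_iUnion.1 (pi_Ico_subset_iUnion_gridCell a (hN j) hx)
    exact mem_iUnion.2 ⟨⟨j, k⟩, hk, hj⟩
  · calc ∑' p, ediam (cell p) ^ ((n : ℝ) + d)
        ≤ ∑' j, ∑' _ : ι → Fin (N j), (r j : ℝ≥0∞) ^ ((n : ℝ) + d) := by
          rw [ENNReal.tsum_sigma']
          exact ENNReal.tsum_le_tsum fun j => ENNReal.tsum_le_tsum fun k =>
            ENNReal.rpow_le_rpow (hcell ⟨j, k⟩) (by positivity)
      _ = ∑' j, (N j : ℝ≥0∞) ^ n * (r j : ℝ≥0∞) ^ ((n : ℝ) + d) := by simp [n]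
      _ ≤ ∑' j, 2 ^ n * (r j : ℝ≥0∞) ^ d :=
          ENNReal.tsum_le_tsum fun j => natCeil_inv_pow_mul_rpow_le (hr j).1 (hr1 j) n d
      _ ≤ 2 ^ n * (ε / 2 ^ n) := by
          rw [ENNReal.tsum_mul_left]; gcongr
      _ = ε := ENNReal.mul_div_cancel (by simp) (by simp)

theorem hausdorffMeasure_univ_prod_eq_zero {V X : Type*} [NormedAddCommGroup V] [NormedSpace ℝ V]
    [FiniteDimensional ℝ V] [MeasurableSpace V] [BorelSpace V] [EMetricSpace X]
    [MeasurableSpace X] [BorelSpace X] {d : ℝ} (hd : 0 ≤ d) {B : Set X} (hB : μH[d] B = 0) :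
    μH[finrank ℝ V + d] (univ ×ˢ B : Set (V × X)) = 0 := by
  rcases hd.eq_or_lt with rfl | hd
  · have hBe : B = ∅ := not_nonempty_iff_eq_empty.1 fun hne => by
      simpa [hB] using one_le_hausdorffMeasure_zero_of_nonempty hne
    simp [hBe]
  set e : (Fin (finrank ℝ V) → ℝ) ≃L[ℝ] V := ContinuousLinearEquiv.ofFinrankEq (by simp)
  have he : LipschitzWith _ (Prod.map e id : (Fin (finrank ℝ V) → ℝ) × X → V × X) :=
    (e.lipschitz.comp LipschitzWith.prod_fst).prodMk LipschitzWith.prod_snd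
  have hcover : (univ ×ˢ B : Set (V × X)) ⊆
      ⋃ a : Fin (finrank ℝ V) → ℤ,
        Prod.map e id '' ((pi univ fun i => Ico (a i : ℝ) (a i + 1)) ×ˢ B) := by
    rintro ⟨v, y⟩ ⟨-, hy⟩
    refine mem_iUnion.2
      ⟨fun i => ⌊e.symm v i⌋, (e.symm v, y), ⟨mem_univ_pi.2 fun i => ?_, hy⟩, by simp⟩
    exact ⟨Int.floor_le _, Int.lt_floor_add_one _⟩
  refine measure_mono_null hcover (measure_iUnion_null fun a => le_antisymm ?_ bot_le)
  calc μH[finrank ℝ V + d] (Prod.map e id '' _) ≤ _ * μH[finrank ℝ V + d] _ :=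
        he.hausdorffMeasure_image_le (by positivity) _
    _ = 0 := by
        have hcube := hausdorffMeasure_pi_Ico_prod_eq_zero (fun i => (a i : ℝ)) hd hB
        rw [Fintype.card_fin] at hcube
        rw [hcube, mul_zero]

theorem hausdorffMeasure_image2_sub_range_eq_zero {V E : Type*} [NormedAddCommGroup V]
    [NormedSpace ℝ V] [FiniteDimensional ℝ V] [MeasurableSpace V] [BorelSpace V]
    [NormedAddCommGroup E] [MeasurableSpace E] [BorelSpace E] {T : Set V} {f : T → E} {K : ℝ≥0}
    (hf : LipschitzWith K f) {d : ℝ} (hd : 0 ≤ d) {B : Set E} (hB : μH[d] B = 0) :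
    μH[finrank ℝ V + d] (image2 (fun x y => y - x) (range f) B) = 0 := by
  have hg : LipschitzWith _ fun p : T × E => p.2 - f p.1 :=
    LipschitzWith.prod_snd.sub (hf.comp LipschitzWith.prod_fst)
  have himage : image2 (fun x y => y - x) (range f) B =
      (fun p : T × E => p.2 - f p.1) '' (univ ×ˢ B) := by
    rw [← image_univ, image2_image_left]
    exact (image_prod _).symm
  have hprod : μH[finrank ℝ V + d] (univ ×ˢ B : Set (T × E)) = 0 := by
    rw [← (isometry_subtype_coe.prodMap isometry_id).hausdorffMeasure_image
      (Or.inl (by positivity))]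
    refine measure_mono_null ?_ (hausdorffMeasure_univ_prod_eq_zero (V := V) hd hB)
    rintro _ ⟨p, ⟨-, hp⟩, rfl⟩
    exact ⟨mem_univ _, hp⟩
  rw [himage]
  refine le_antisymm ?_ bot_le
  calc μH[finrank ℝ V + d] _ ≤ _ * μH[finrank ℝ V + d] (univ ×ˢ B : Set (T × E)) :=
        hg.hausdorffMeasure_image_le (by positivity) _
    _ = 0 := by rw [hprod, mul_zero]

/-- **The set of displacement vectors is Lebesgue-null.** If `A ⊆ ℝ^ℓ` is countably
`m`-rectifiable and `B ⊆ ℝ^ℓ` is `(ℓ-m)`-negligible, then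
`{y − x : x ∈ A, y ∈ B}` has `ℓ`-dimensional Lebesgue (outer) measure zero. -/
theorem displacement_vectors_null (ℓ m : ℕ) (hm : m ≤ ℓ)
    (A B : Set (EuclideanSpace ℝ (Fin ℓ)))
    (hA : CountablyRectifiable m A)
    (hB : μH[((ℓ - m : ℕ) : ℝ)] B = 0) :
    volume (Set.image2 (fun x y => y - x) A B) = 0 := by
  obtain ⟨S, f, C, hf, rfl⟩ := hA
  rw [image2_iUnion_left]
  refine measure_iUnion_null fun i => ?_
  have hnull := hausdorffMeasure_image2_sub_range_eq_zero (hf i) (Nat.cast_nonneg _) hB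
  rw [finrank_euclideanSpace_fin, ← Nat.cast_add, Nat.add_sub_cancel' hm] at hnull
  rw [← EuclideanSpace.euclideanHausdorffMeasure_eq_volume, euclideanHausdorffMeasure_def,
    Measure.smul_apply, hnull, smul_zero]
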